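/- Let m ≥ 4 and let G be the group presented by generators g_1, …, g_m with relations [g_i, g_{i+1}] = 1 for i = 1, …, m−1. Then the centralizer of the element g_1·g_m in G is the cyclic subgroup generated by g_1·g_m. -/

import Mathlib

/-!
Cutting the path between its first and last vertex, `G` is the amalgamated product `A *_C B` of
`A = ⟨g_1, …, g_{m-1}⟩` and `B = ⟨g_2, …, g_m⟩` (both again path groups) over
`C = ⟨g_2, …, g_{m-1}⟩`, with `g_1 ∈ A \ C` and `g_m ∈ B \ C`.

In an amalgamated product the centralizer of such a product `g = a b` is `⟨g⟩` as soon as no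
nontrivial element of `C` commutes with `g`. Let `x` commute with `g`. A single letter never does.
Otherwise, multiplying `x` or `x⁻¹` on the left by `g` or `g⁻¹` shortens its reduced word, unless
no end letter of `x` cancels against `b` or `a⁻¹`; but then `g x g⁻¹` is a reduced word from `A` to
`A` and `g⁻¹ x g` one from `B` to `B`, although both equal `x`. Induction on the length concludes.

An element `c ∈ C` commuting with `g_1 g_m` commutes with `g_1` (kill `g_m`), so `c ∈ ⟨g_2⟩` by the
same decomposition and induction on `m`; as `g_2` and `g_m` are not adjacent, a map onto the
infinite dihedral group shows that `g_2^t` commutes with `g_m` only for `t = 0`.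
-/

/-- The commutation relations `[g_i, g_{i+1}] = 1` (as elements of the free group on `Fin m`)
presenting the right-angled Artin group on the path graph with `m` vertices. -/
def pathRels (m : ℕ) : Set (FreeGroup (Fin m)) :=
  {r | ∃ i j : Fin m, (i : ℕ) + 1 = (j : ℕ) ∧
    r = FreeGroup.of i * FreeGroup.of j * (FreeGroup.of i)⁻¹ * (FreeGroup.of j)⁻¹}

/-- The group `⟨g_1, …, g_m ∣ [g_i, g_{i+1}] = 1⟩`. -/
abbrev PathGroup (m : ℕ) := PresentedGroup (pathRels m)

/-- The generator `g_i` of `PathGroup m`. -/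
def pathGen (m : ℕ) (i : Fin m) : PathGroup m := PresentedGroup.of i

namespace Monoid.PushoutI

open Function Subgroup

section ReducedForm

variable {ι : Type*} {G : ι → Type*} [∀ i, Group (G i)] {H : Type*} [Group H]
  {φ : ∀ i, H →* G i}

variable (φ) in
/-- `ReducedForm φ p q n x`: `x` is the product of a reduced word of `n` letters, none of them in
the image of the base group and consecutive ones in different factors, whose first letter lies in
`G p` and whose last letter lies in `G q`. -/
inductive ReducedForm : ι → ι → ℕ → PushoutI φ → Prop
  | of {p : ι} {u : G p} : u ∉ (φ p).range → ReducedForm p p 1 (of p u)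
  | cons {p p' q : ι} {n : ℕ} {u : G p} {y : PushoutI φ} : u ∉ (φ p).range → p ≠ p' →
      ReducedForm p' q n y → ReducedForm p q (n + 1) (of p u * y)

variable {p q p' q' r : ι} {n k : ℕ} {x y m : PushoutI φ}

theorem of_mem_range_base_or_reducedForm (w : G r) :
    of r w ∈ (base φ).range ∨ ReducedForm φ r r 1 (of r w) := by
  by_cases hw : w ∈ (φ r).range
  · obtain ⟨c, rfl⟩ := hw
    exact .inl ⟨c, (of_apply_eq_base φ r c).symm⟩
  · exact .inr (.of hw)

theorem ReducedForm.append (hx : ReducedForm φ p q n x) (hy : ReducedForm φ p' q' k y)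
    (h : q ≠ p') : ReducedForm φ p q' (n + k) (x * y) := by
  induction hx with
  | of hu => simpa [add_comm] using ReducedForm.cons hu h hy
  | cons hu hp _ ih => simpa [mul_assoc, add_right_comm] using ReducedForm.cons hu hp (ih h)

protected theorem ReducedForm.inv (hx : ReducedForm φ p q n x) : ReducedForm φ q p n x⁻¹ := by
  induction hx with
  | of hu => simpa using ReducedForm.of (mt (inv_mem_iff).1 hu)
  | cons hu hp _ ih => simpa using ih.append (.of (mt (inv_mem_iff).1 hu)) hp.symm

theorem ReducedForm.base_mul (hx : ReducedForm φ p q n x) (c : H) :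
    ReducedForm φ p q n (base φ c * x) := by
  have hc : ∀ {u : G p}, u ∉ (φ p).range → φ p c * u ∉ (φ p).range :=
    mt (mul_mem_cancel_left (MonoidHom.mem_range.2 ⟨c, rfl⟩)).1
  cases hx with
  | of hu => simpa [← of_apply_eq_base φ p c] using ReducedForm.of (hc hu)
  | cons hu hp hy =>
    simpa [← of_apply_eq_base φ p c, mul_assoc] using ReducedForm.cons (hc hu) hp hy

theorem ReducedForm.exists_reduced_word (hx : ReducedForm φ p q n x) :
    ∃ w : CoprodI.Word G, w.fstIdx = some p ∧ Reduced φ w ∧ ofCoprodI w.prod = x := by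
  induction hx with
  | @of p u hu =>
    refine ⟨.cons u .empty (by simp [CoprodI.Word.fstIdx]) (by rintro rfl; exact hu (one_mem _)),
      by simp, ?_, by simp⟩
    simpa [Reduced, MonoidHom.mem_range] using hu
  | @cons p p' q n u y hu hp _ ih =>
    obtain ⟨w, hw, hred, rfl⟩ := ih
    refine ⟨.cons u w (by rw [hw]; simpa using hp.symm) (by rintro rfl; exact hu (one_mem _)),
      by simp, ?_, by simp⟩
    exact List.forall_mem_cons.2 ⟨hu, hred⟩

theorem ReducedForm.notMem_range_base (hφ : ∀ i, Injective (φ i))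
    (hx : ReducedForm φ p q n x) : x ∉ (base φ).range := by
  obtain ⟨w, hw, hred, rfl⟩ := hx.exists_reduced_word
  intro h
  simp [hred.eq_empty_of_mem_range hφ h, CoprodI.Word.fstIdx] at hw

theorem ReducedForm.left_unique (hφ : ∀ i, Injective (φ i)) (hx : ReducedForm φ p q n x)
    (hx' : ReducedForm φ p' q' k x) : p = p' := by
  by_contra h
  exact (hx.inv.append hx' h).notMem_range_base hφ (by simp)

theorem ReducedForm.left_eq_of_eq_of (hφ : ∀ i, Injective (φ i)) (hx : ReducedForm φ p q n x)
    {w : G r} (h : x = PushoutI.of r w) : p = r := by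
  rcases of_mem_range_base_or_reducedForm (φ := φ) w with hw | hw
  · exact absurd (h ▸ hw) (hx.notMem_range_base hφ)
  · exact hx.left_unique hφ (h ▸ hw)

theorem ReducedForm.of_mul_mem_range_base_or (hy : ReducedForm φ p q n y) (g : G p) :
    PushoutI.of p g * y ∈ (base φ).range ∨
      ∃ p' k, k ≤ n ∧ ReducedForm φ p' q k (PushoutI.of p g * y) := by
  cases hy with
  | @of _ u hu =>
    rw [← map_mul]
    exact (of_mem_range_base_or_reducedForm (g * u)).imp_right fun h => ⟨p, 1, le_rfl, h⟩
  | @cons _ p' _ n u y hu hp hy =>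
    rw [← mul_assoc, ← map_mul]
    by_cases hgu : g * u ∈ (φ p).range
    · obtain ⟨c, hc⟩ := hgu
      exact .inr ⟨p', n, by omega, by rw [← hc, of_apply_eq_base]; exact hy.base_mul c⟩
    · exact .inr ⟨p, n + 1, le_rfl, .cons hgu hp hy⟩

theorem mem_range_base_or_exists_reducedForm (x : PushoutI φ) :
    x ∈ (base φ).range ∨ ∃ p q n, ReducedForm φ p q n x := by
  suffices h : ∀ y, (y ∈ (base φ).range ∨ ∃ p q n, ReducedForm φ p q n y) →
      x * y ∈ (base φ).range ∨ ∃ p q n, ReducedForm φ p q n (x * y) by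
    simpa using h 1 (.inl (one_mem _))
  induction x using PushoutI.induction_on with
  | of i g =>
    rintro y (⟨c, rfl⟩ | ⟨p, q, n, hy⟩)
    · rw [← of_apply_eq_base φ i c, ← map_mul]
      exact (of_mem_range_base_or_reducedForm _).imp_right fun h => ⟨i, i, 1, h⟩
    · by_cases hip : i = p
      · subst hip
        exact (hy.of_mul_mem_range_base_or g).imp_right fun ⟨p', k, _, h⟩ => ⟨p', q, k, h⟩
      · by_cases hg : g ∈ (φ i).range
        · obtain ⟨c, rfl⟩ := hg
          exact .inr ⟨p, q, n, by simpa [of_apply_eq_base] using hy.base_mul c⟩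
        · exact .inr ⟨i, q, n + 1, .cons hg hip hy⟩
  | base c =>
    rintro y (⟨c', rfl⟩ | ⟨p, q, n, hy⟩)
    · exact .inl ⟨c * c', by simp⟩
    · exact .inr ⟨p, q, n, hy.base_mul c⟩
  | mul x x' ihx ihx' =>
    intro y hy
    rw [mul_assoc]
    exact ihx _ (ihx' _ hy)

theorem exists_reducedForm_of_mul_of {w : G r} {u : G p} (hw : w ∉ (φ r).range)
    (hu : u ∉ (φ p).range) (h : of r w * of p u ∉ (base φ).range) :
    ∃ k, ReducedForm φ r p k (of r w * of p u) := by
  by_cases hrp : r = p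
  · subst hrp
    rw [← map_mul] at h ⊢
    exact ⟨1, (of_mem_range_base_or_reducedForm _).resolve_left h⟩
  · exact ⟨2, .cons hw hrp (.of hu)⟩

theorem reducedForm_of_mul_of_mul_of {w w' : G r} {u : G p} (hw : w ∉ (φ r).range)
    (hu : u ∉ (φ p).range) (hw' : w' ∉ (φ r).range) (hrp : r ≠ p) :
    ReducedForm φ r r 3 (of r w * of p u * of r w') := by
  simpa [mul_assoc] using ReducedForm.cons hw hrp (.cons hu hrp.symm (.of hw'))

variable (φ) in
/-- `m` can stand between a letter of `G p` and a letter of `G q` in a reduced word of `k + 2`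
letters. -/
def FitsBetween (p q : ι) (k : ℕ) (m : PushoutI φ) : Prop :=
  (k = 0 ∧ m = 1 ∧ p ≠ q) ∨ ∃ p' q', p' ≠ p ∧ q' ≠ q ∧ ReducedForm φ p' q' k m

theorem FitsBetween.inv (hm : FitsBetween φ p q k m) : FitsBetween φ q p k m⁻¹ := by
  rcases hm with ⟨rfl, rfl, hpq⟩ | ⟨p', q', hp', hq', hm⟩
  · exact .inl ⟨rfl, inv_one, hpq.symm⟩
  · exact .inr ⟨q', p', hq', hp', hm.inv⟩

theorem FitsBetween.mul_of (hm : FitsBetween φ p q k m) {v : G q} (hv : v ∉ (φ q).range) :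
    ∃ p', p' ≠ p ∧ ReducedForm φ p' q (k + 1) (m * of q v) := by
  rcases hm with ⟨rfl, rfl, hpq⟩ | ⟨p', q', hp', hq', hm⟩
  · exact ⟨q, hpq.symm, by simpa using ReducedForm.of hv⟩
  · exact ⟨p', hp', hm.append (.of hv) hq'⟩

theorem ReducedForm.mul_mul {s : ι} {z : PushoutI φ} {l : ℕ} (hx : ReducedForm φ r p n x)
    (hm : FitsBetween φ p q k m) (hz : ReducedForm φ q s l z) :
    ReducedForm φ r s (n + k + l) (x * m * z) := by
  rcases hm with ⟨rfl, rfl, hpq⟩ | ⟨p', q', hp', hq', hm⟩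
  · simpa using hx.append hz hpq
  · exact (hx.append hm hp'.symm).append hz hq'

theorem ReducedForm.exists_eq_mul_of (hy : ReducedForm φ p q (k + 1) y) :
    ∃ v, v ∉ (φ q).range ∧ ((k = 0 ∧ p = q ∧ y = PushoutI.of q v) ∨
      ∃ q' m, q' ≠ q ∧ ReducedForm φ p q' k m ∧ y = m * PushoutI.of q v) := by
  generalize hz : y⁻¹ = z
  have h := hz ▸ hy.inv
  cases h with
  | @of _ u hu =>
    refine ⟨u⁻¹, mt (inv_mem_iff).1 hu, .inl ⟨by omega, rfl, ?_⟩⟩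
    simp [← inv_eq_iff_eq_inv.2 hz.symm]
  | @cons _ q' _ _ u z hu hq h =>
    refine ⟨u⁻¹, mt (inv_mem_iff).1 hu, .inr ⟨q', z⁻¹, hq.symm, h.inv, ?_⟩⟩
    simp [← inv_eq_iff_eq_inv.2 hz.symm]

theorem ReducedForm.exists_eq_of_mul_mul_of (hx : ReducedForm φ p q (k + 2) x) :
    ∃ u v m, u ∉ (φ p).range ∧ v ∉ (φ q).range ∧ FitsBetween φ p q k m ∧
      x = PushoutI.of p u * m * PushoutI.of q v := by
  cases hx with
  | @cons _ p' _ _ u y hu hp hy =>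
    obtain ⟨v, hv, ⟨rfl, rfl, rfl⟩ | ⟨q', m, hq', hm, rfl⟩⟩ := hy.exists_eq_mul_of
    · exact ⟨u, v, 1, hu, hv, .inl ⟨rfl, rfl, hp⟩, by simp⟩
    · exact ⟨u, v, m, hu, hv, .inr ⟨p', q', hp.symm, hq', hm⟩, by simp [mul_assoc]⟩

variable {i j : ι} {a : G i} {b : G j}

theorem exists_reducedForm_conj (hij : i ≠ j) (ha : a ∉ (φ i).range) (hb : b ∉ (φ j).range)
    {u : G p} {v : G q} (hu : u ∉ (φ p).range) (hv : v ∉ (φ q).range)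
    (hm : FitsBetween φ p q k m)
    (hbu : of j b * of p u ∉ (base φ).range) (hbv : of j b * of q v⁻¹ ∉ (base φ).range) :
    ∃ n, ReducedForm φ i i n
      (of i a * of j b * (of p u * m * of q v) * (of i a * of j b)⁻¹) := by
  obtain ⟨n₁, h₁⟩ := exists_reducedForm_of_mul_of hb hu hbu
  obtain ⟨n₂, h₂⟩ := exists_reducedForm_of_mul_of hb (mt (inv_mem_iff).1 hv) hbv
  have h := ((ReducedForm.of ha).append (h₁.mul_mul hm h₂.inv) hij).append
    (.of (mt (inv_mem_iff).1 ha)) hij.symm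
  exact ⟨_, by simpa [mul_assoc] using h⟩

theorem not_commute_of_mul_of (hφ : ∀ i, Injective (φ i)) (hij : i ≠ j) (ha : a ∉ (φ i).range)
    (hb : b ∉ (φ j).range) {u : G p} (hu : u ∉ (φ p).range) :
    ¬Commute (of (φ := φ) p u) (of i a * of j b) := by
  intro h
  have key : of (φ := φ) i a⁻¹ * of p u * of i a = of j b * of p u * of j b⁻¹ := by
    simp only [map_inv]
    calc (of i a)⁻¹ * of p u * of i a
        = (of i a)⁻¹ * (of p u * (of i a * of j b)) * (of j b)⁻¹ := by group
      _ = of j b * of p u * (of j b)⁻¹ := by rw [h.eq]; group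
  have ha' := mt (inv_mem_iff).1 ha
  have hb' := mt (inv_mem_iff).1 hb
  by_cases hpi : p = i
  · subst hpi
    exact hij.symm ((reducedForm_of_mul_of_mul_of hb hu hb' hij.symm).left_eq_of_eq_of hφ
      (w := a⁻¹ * u * a) (by simp only [← key, map_mul]))
  · have hl := reducedForm_of_mul_of_mul_of ha' hu ha (Ne.symm hpi)
    by_cases hpj : p = j
    · subst hpj
      exact hij (hl.left_eq_of_eq_of hφ (w := b * u * b⁻¹) (by simp only [key, map_mul]))
    · exact hij (hl.left_unique hφ (key ▸ reducedForm_of_mul_of_mul_of hb hu hb' (Ne.symm hpj)))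

theorem mem_range_of_commute_of (hφ : ∀ i, Injective (φ i)) (hij : i ≠ j)
    (ha : a ∉ (φ i).range) (h : Commute (of (φ := φ) i a) (of j b)) : b ∈ (φ j).range := by
  by_contra hb
  have hc := reducedForm_of_mul_of_mul_of ha hb (mt (inv_mem_iff).1 ha) hij
  exact hij (hc.left_eq_of_eq_of hφ (w := b) (by simp [h.eq, mul_assoc]))

end ReducedForm

section Bool

variable {G : Bool → Type*} [∀ i, Group (G i)] {H : Type*} [Group H] {φ : ∀ i, H →* G i}
  {i j p q : Bool} {a : G i} {b : G j} {u : G p} {v : G q} {k n : ℕ} {m x : PushoutI φ}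

variable (φ) in
def HasLengthLT (n : ℕ) (x : PushoutI φ) : Prop :=
  x ∈ (base φ).range ∨ ∃ p q k, k < n ∧ ReducedForm φ p q k x

theorem HasLengthLT.mono (h : HasLengthLT φ k x) (hkn : k ≤ n) : HasLengthLT φ n x :=
  h.imp_right fun ⟨p, q, l, hl, hx⟩ => ⟨p, q, l, by omega, hx⟩

/-- If `b` cancels against the first letter `u` of `u m v` into the base group, the next letter lies
in `G i` and absorbs `a`, so `a b u m v` has fewer letters than `u m v`. -/
theorem hasLengthLT_of_mul_of_mem_range (hφ : ∀ i, Injective (φ i)) (hij : i ≠ j)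
    (hb : b ∉ (φ j).range) (hu : u ∉ (φ p).range) (hv : v ∉ (φ q).range)
    (hm : FitsBetween φ p q k m) (hbu : of j b * of p u ∈ (base φ).range) :
    HasLengthLT φ (k + 2) (of i a * of j b * (of p u * m * of q v)) := by
  obtain rfl : p = j := by
    by_contra hpj
    exact (ReducedForm.cons hb (Ne.symm hpj) (.of hu)).notMem_range_base hφ hbu
  obtain ⟨c, hc⟩ := hbu
  obtain ⟨p', hp', hy⟩ := hm.mul_of hv
  obtain rfl : p' = i := by revert hp' hij; cases p' <;> cases i <;> cases p <;> simp
  have h : of p' a * of p b * (of p u * m * of q v) = of p' (a * φ p' c) * (m * of q v) := by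
    rw [map_mul, of_apply_eq_base, hc]
    simp [mul_assoc]
  rw [h]
  rcases hy.of_mul_mem_range_base_or (a * φ p' c) with h | ⟨p'', k', hk', h⟩
  · exact .inl h
  · exact .inr ⟨p'', q, k', by omega, h⟩

theorem exists_hasLengthLT_of_commute (hφ : ∀ i, Injective (φ i)) (hij : i ≠ j)
    (ha : a ∉ (φ i).range) (hb : b ∉ (φ j).range) (hx : ReducedForm φ p q n x)
    (hc : Commute x (of i a * of j b)) :
    ∃ z ∈ zpowers (of i a * of j b), HasLengthLT φ n (z * x) ∨ HasLengthLT φ n (z * x⁻¹) := by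
  have ha' := mt (inv_mem_iff).1 ha
  have hb' := mt (inv_mem_iff).1 hb
  have hginv : (of i a * of j b)⁻¹ = of (φ := φ) j b⁻¹ * of i a⁻¹ := by simp
  obtain _ | _ | k := n
  · cases hx
  · cases hx with
    | of hu => exact (not_commute_of_mul_of hφ hij ha hb hu hc).elim
    | cons _ _ hy => cases hy
  obtain ⟨u, v, m, hu, hv, hm, rfl⟩ := hx.exists_eq_of_mul_mul_of
  have hinv : (of p u * m * of q v)⁻¹ = of q v⁻¹ * m⁻¹ * of p u⁻¹ := by simp [mul_assoc]
  have hu' := mt (inv_mem_iff).1 hu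
  have hv' := mt (inv_mem_iff).1 hv
  by_cases h₁ : of j b * of p u ∈ (base φ).range
  · exact ⟨_, mem_zpowers _, .inl (hasLengthLT_of_mul_of_mem_range hφ hij hb hu hv hm h₁)⟩
  by_cases h₂ : of j b * of q v⁻¹ ∈ (base φ).range
  · refine ⟨_, mem_zpowers _, .inr ?_⟩
    rw [hinv]
    exact hasLengthLT_of_mul_of_mem_range hφ hij hb hv' hu' hm.inv h₂
  by_cases h₃ : of i a⁻¹ * of p u ∈ (base φ).range
  · refine ⟨_, inv_mem (mem_zpowers _), .inl ?_⟩
    rw [hginv]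
    exact hasLengthLT_of_mul_of_mem_range hφ hij.symm ha' hu hv hm h₃
  by_cases h₄ : of i a⁻¹ * of q v⁻¹ ∈ (base φ).range
  · refine ⟨_, inv_mem (mem_zpowers _), .inr ?_⟩
    rw [hginv, hinv]
    exact hasLengthLT_of_mul_of_mem_range hφ hij.symm ha' hv' hu' hm.inv h₄
  obtain ⟨n₁, hx₁⟩ := exists_reducedForm_conj hij ha hb hu hv hm h₁ h₂
  obtain ⟨n₂, hx₂⟩ := exists_reducedForm_conj hij.symm hb' ha' hu hv hm h₃ h₄
  rw [← hc.eq, mul_inv_cancel_right] at hx₁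
  rw [← hginv, ← hc.inv_right.eq, mul_inv_cancel_right] at hx₂
  exact absurd (hx₁.left_unique hφ hx₂) hij

theorem centralizer_of_mul_of (hφ : ∀ i, Injective (φ i)) (hij : i ≠ j)
    (ha : a ∉ (φ i).range) (hb : b ∉ (φ j).range)
    (hbase : ∀ c, Commute (base φ c) (of i a * of j b) → c = 1) :
    centralizer {of (φ := φ) i a * of j b} = zpowers (of i a * of j b) := by
  refine le_antisymm (fun x hx => ?_) (zpowers_le.2 (mem_centralizer_iff.2 (by simp)))
  have hbase' : ∀ {y}, y ∈ (base φ).range → Commute y (of i a * of j b) →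
      y ∈ zpowers (of i a * of j b) := by
    rintro _ ⟨c, rfl⟩ hc
    simp [hbase c hc]
  have hform : ∀ n x p q, ReducedForm φ p q n x → Commute x (of i a * of j b) →
      x ∈ zpowers (of i a * of j b) := by
    intro n
    induction n using Nat.strong_induction_on with
    | _ n ih =>
    have hshort : ∀ y, HasLengthLT φ n y → Commute y (of i a * of j b) →
        y ∈ zpowers (of i a * of j b) := by
      rintro y (hy | ⟨p, q, k, hk, hy⟩) hyc
      exacts [hbase' hy hyc, ih k hk y p q hy hyc]
    intro x p q hx hxc
    obtain ⟨z, hz, h | h⟩ := exists_hasLengthLT_of_commute hφ hij ha hb hx hxc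
    all_goals
      have hzc : Commute z (of i a * of j b) := by
        obtain ⟨t, rfl⟩ := mem_zpowers_iff.1 hz
        exact (Commute.refl _).zpow_left t
    · simpa using mul_mem (inv_mem hz) (hshort _ h (hzc.mul_left hxc))
    · simpa using inv_mem (mul_mem (inv_mem hz) (hshort _ h (hzc.mul_left hxc.inv_left)))
  have hx : Commute x (of i a * of j b) := (mem_centralizer_iff.1 hx _ rfl).symm
  rcases mem_range_base_or_exists_reducedForm x with h | ⟨p, q, n, h⟩
  exacts [hbase' h hx, hform n x p q h hx]

end Bool

end Monoid.PushoutI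

namespace PathGroup

open Function Subgroup Monoid

section Lift

variable {n : ℕ} {K : Type*} [Group K]

def lift (f : Fin n → K) (hf : ∀ i j : Fin n, (i : ℕ) + 1 = j → Commute (f i) (f j)) :
    PathGroup n →* K :=
  PresentedGroup.toGroup (f := f) <| by
    rintro _ ⟨i, j, hij, rfl⟩
    simp only [map_mul, map_inv, FreeGroup.lift_apply_of, (hf i j hij).eq]
    group

@[simp]
theorem lift_pathGen (f : Fin n → K) (hf) (i : Fin n) : lift f hf (pathGen n i) = f i :=
  PresentedGroup.toGroup.of _

theorem hom_ext {f f' : PathGroup n →* K} (h : ∀ i, f (pathGen n i) = f' (pathGen n i)) :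
    f = f' :=
  PresentedGroup.ext h

end Lift

variable {n : ℕ}

theorem commute_pathGen {i j : Fin n} (hij : (i : ℕ) + 1 = j) :
    Commute (pathGen n i) (pathGen n j) := by
  have h := PresentedGroup.one_of_mem (rels := pathRels n) ⟨i, j, hij, rfl⟩
  change pathGen n i * pathGen n j * (pathGen n i)⁻¹ * (pathGen n j)⁻¹ = 1 at h
  rwa [mul_inv_eq_one, mul_inv_eq_iff_eq_mul] at h

theorem pathGen_ne_one (i : Fin n) : pathGen n i ≠ 1 := by
  intro h
  have := congrArg (lift (fun _ => Multiplicative.ofAdd (1 : ℤ)) fun _ _ _ => Commute.all _ _) h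
  simp at this

def succHom : PathGroup n →* PathGroup (n + 1) :=
  lift (fun i => pathGen _ i.succ) fun _ _ h => commute_pathGen (by simp [h])

def castSuccHom : PathGroup n →* PathGroup (n + 1) :=
  lift (fun i => pathGen _ i.castSucc) fun _ _ h => commute_pathGen (by simp [h])

@[simp]
theorem succHom_pathGen (i : Fin n) : succHom (pathGen n i) = pathGen (n + 1) i.succ :=
  lift_pathGen ..

@[simp]
theorem castSuccHom_pathGen (i : Fin n) :
    castSuccHom (pathGen n i) = pathGen (n + 1) i.castSucc :=
  lift_pathGen ..

def dropFirst : PathGroup (n + 1) →* PathGroup n :=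
  lift (Fin.cases 1 (pathGen n)) fun i j h => by
    induction i using Fin.cases with
    | zero => exact Commute.one_left _
    | succ i =>
      induction j using Fin.cases with
      | zero => simp at h
      | succ j => exact commute_pathGen (by simpa using h)

def dropLast : PathGroup (n + 1) →* PathGroup n :=
  lift (Fin.lastCases 1 (pathGen n)) fun i j h => by
    induction j using Fin.lastCases with
    | last => simp
    | cast j =>
      induction i using Fin.lastCases with
      | last => simp only [Fin.val_last, Fin.val_castSucc] at h; omega
      | cast i => simpa using commute_pathGen (by simpa using h)

@[simp]
theorem dropLast_pathGen_castSucc (i : Fin n) :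
    dropLast (pathGen (n + 1) i.castSucc) = pathGen n i := by
  simp [dropLast]

@[simp]
theorem dropLast_pathGen_last : dropLast (pathGen (n + 1) (Fin.last n)) = 1 := by
  simp [dropLast]

theorem dropFirst_succHom (x : PathGroup n) : dropFirst (succHom x) = x := by
  suffices h : dropFirst.comp succHom = MonoidHom.id (PathGroup n) from DFunLike.congr_fun h x
  exact hom_ext fun i => by simp [dropFirst]

theorem dropLast_castSuccHom (x : PathGroup n) : dropLast (castSuccHom x) = x := by
  suffices h : dropLast.comp castSuccHom = MonoidHom.id (PathGroup n) from DFunLike.congr_fun h x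
  exact hom_ext fun i => by simp [dropLast]

theorem succHom_injective : Injective (succHom (n := n)) :=
  LeftInverse.injective dropFirst_succHom

theorem castSuccHom_injective : Injective (castSuccHom (n := n)) :=
  LeftInverse.injective dropLast_castSuccHom

theorem pathGen_zero_notMem_range_succHom : pathGen (n + 1) 0 ∉ (succHom (n := n)).range := by
  rintro ⟨y, hy⟩
  have hy₁ : y = 1 := by rw [← dropFirst_succHom y, hy]; simp [dropFirst]
  exact pathGen_ne_one _ (by rw [← hy, hy₁, map_one])

theorem pathGen_last_notMem_range_castSuccHom :
    pathGen (n + 1) (Fin.last n) ∉ (castSuccHom (n := n)).range := by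
  rintro ⟨y, hy⟩
  have hy₁ : y = 1 := by rw [← dropLast_castSuccHom y, hy, dropLast_pathGen_last]
  exact pathGen_ne_one _ (by rw [← hy, hy₁, map_one])

theorem succHom_castSuccHom (x : PathGroup n) :
    succHom (castSuccHom x) = castSuccHom (succHom x) :=
  DFunLike.congr_fun
    (hom_ext (f := succHom.comp castSuccHom) (f' := castSuccHom.comp succHom) fun i => by simp) x

/-- The diagram gluing two copies of `PathGroup (n + 2)` along `PathGroup (n + 1)`: it sits in the
left copy (`true`) as the last `n + 1` generators and in the right copy (`false`) as the first
`n + 1`. -/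
def amalgamMaps (n : ℕ) : Bool → PathGroup (n + 1) →* PathGroup (n + 2) :=
  fun b => cond b succHom castSuccHom

theorem of_true_succHom (y : PathGroup (n + 1)) :
    PushoutI.of (φ := amalgamMaps n) true (succHom y) =
      PushoutI.of (φ := amalgamMaps n) false (castSuccHom y) :=
  (PushoutI.of_apply_eq_base (amalgamMaps n) true y).trans
    (PushoutI.of_apply_eq_base (amalgamMaps n) false y).symm

theorem of_true_pathGen_last :
    PushoutI.of (φ := amalgamMaps n) true (pathGen (n + 2) (Fin.last (n + 1))) =
      PushoutI.of false (pathGen (n + 2) (Fin.last n).castSucc) := by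
  rw [← Fin.succ_last, ← succHom_pathGen, of_true_succHom, castSuccHom_pathGen]

def toPathGroup (n : ℕ) : PushoutI (amalgamMaps n) →* PathGroup (n + 3) :=
  PushoutI.lift (fun b => cond b castSuccHom succHom) (castSuccHom.comp succHom) fun b => by
    cases b
    exacts [MonoidHom.ext succHom_castSuccHom, rfl]

@[simp]
theorem toPathGroup_of_true (y : PathGroup (n + 2)) :
    toPathGroup n (PushoutI.of true y) = castSuccHom y :=
  PushoutI.lift_of ..

@[simp]
theorem toPathGroup_of_false (y : PathGroup (n + 2)) :
    toPathGroup n (PushoutI.of false y) = succHom y :=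
  PushoutI.lift_of ..

@[simp]
theorem toPathGroup_base (c : PathGroup (n + 1)) :
    toPathGroup n (PushoutI.base _ c) = castSuccHom (succHom c) :=
  PushoutI.lift_base ..

def toPushout (n : ℕ) : PathGroup (n + 3) →* PushoutI (amalgamMaps n) :=
  lift (Fin.lastCases (PushoutI.of false (pathGen _ (Fin.last _)))
    fun j => PushoutI.of true (pathGen _ j)) fun i j h => by
    induction j using Fin.lastCases with
    | last =>
      induction i using Fin.lastCases with
      | last => simp at h
      | cast i =>
        obtain rfl : i = Fin.last _ := Fin.ext (by simpa using h)
        rw [Fin.lastCases_castSucc, Fin.lastCases_last, of_true_pathGen_last]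
        exact (commute_pathGen (by simp)).map _
    | cast j =>
      induction i using Fin.lastCases with
      | last => simp only [Fin.val_last, Fin.val_castSucc] at h; omega
      | cast i => simpa using (commute_pathGen (by simpa using h)).map _

@[simp]
theorem toPushout_pathGen_castSucc (i : Fin (n + 2)) :
    toPushout n (pathGen _ i.castSucc) = PushoutI.of true (pathGen _ i) := by
  simp [toPushout]

@[simp]
theorem toPushout_pathGen_last :
    toPushout n (pathGen _ (Fin.last _)) = PushoutI.of false (pathGen _ (Fin.last _)) := by
  simp [toPushout]

def pushoutEquiv (n : ℕ) : PushoutI (amalgamMaps n) ≃* PathGroup (n + 3) :=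
  MonoidHom.toMulEquiv (toPathGroup n) (toPushout n)
    (PushoutI.hom_ext_nonempty fun b => hom_ext fun j => by
      cases b
      · induction j using Fin.lastCases with
        | last => simp
        | cast j =>
          change toPushout n (toPathGroup n (PushoutI.of false (pathGen _ j.castSucc))) = _
          rw [toPathGroup_of_false, succHom_pathGen, Fin.succ_castSucc, toPushout_pathGen_castSucc,
            ← succHom_pathGen, of_true_succHom, castSuccHom_pathGen]
          rfl
      · simp)
    (hom_ext fun i => by
      induction i using Fin.lastCases with
      | last => simp
      | cast i => simp)

@[simp]
theorem pushoutEquiv_apply (x : PushoutI (amalgamMaps n)) : pushoutEquiv n x = toPathGroup n x :=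
  rfl

@[simp]
theorem pushoutEquiv_symm_castSuccHom (y : PathGroup (n + 2)) :
    (pushoutEquiv n).symm (castSuccHom y) = PushoutI.of true y :=
  (pushoutEquiv n).symm_apply_eq.2 (by simp)

@[simp]
theorem pushoutEquiv_symm_succHom (y : PathGroup (n + 2)) :
    (pushoutEquiv n).symm (succHom y) = PushoutI.of false y :=
  (pushoutEquiv n).symm_apply_eq.2 (by simp)

theorem amalgamMaps_injective (n : ℕ) (b : Bool) : Injective (amalgamMaps n b) := by
  cases b
  exacts [castSuccHom_injective, succHom_injective]

theorem mem_zpowers_of_commute_pathGen_zero : ∀ (n : ℕ) (u : PathGroup (n + 2)),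
    u ∈ (succHom (n := n + 1)).range → Commute u (pathGen (n + 2) 0) →
      u ∈ zpowers (pathGen (n + 2) 1)
  | 0, _, ⟨y, rfl⟩, _ => by
    have hy := PresentedGroup.generated_by _ (zpowers (pathGen 1 0))
      (fun j => by rw [Subsingleton.elim j 0]; exact mem_zpowers _) y
    obtain ⟨t, rfl⟩ := mem_zpowers_iff.1 hy
    exact mem_zpowers_iff.2 ⟨t, by simp⟩
  | n + 1, _, ⟨y, rfl⟩, h => by
    rw [← Fin.castSucc_zero, ← castSuccHom_pathGen] at h
    have h' := (h.map (pushoutEquiv n).symm).symm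
    rw [pushoutEquiv_symm_castSuccHom, pushoutEquiv_symm_succHom] at h'
    obtain ⟨c, rfl⟩ := PushoutI.mem_range_of_commute_of (amalgamMaps_injective n) (by decide)
      pathGen_zero_notMem_range_succHom h'
    have hc := h.map dropLast
    simp only [amalgamMaps, cond_false, succHom_castSuccHom, dropLast_castSuccHom] at hc
    obtain ⟨t, ht⟩ := mem_zpowers_iff.1 (mem_zpowers_of_commute_pathGen_zero n _ ⟨c, rfl⟩ hc)
    have ht' := congrArg castSuccHom ht
    exact mem_zpowers_iff.2 ⟨t, by simpa [amalgamMaps, succHom_castSuccHom] using ht'⟩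

/-- Sending `g_i ↦ r 1`, `g_j ↦ s 0` and the other generators to `1` maps into the infinite
dihedral group, where `r t` commutes with `s 0` only for `t = 0`. -/
theorem eq_zero_of_commute_zpow {i j : Fin n} (hij : (i : ℕ) + 1 < j) {t : ℤ}
    (h : Commute (pathGen n i ^ t) (pathGen n j)) : t = 0 := by
  let f : PathGroup n →* DihedralGroup 0 :=
    lift (fun l => if l = i then .r 1 else if l = j then .sr 0 else 1) fun l l' hl => by
      by_cases hl : l = i ∨ l = j
      · have h₁ : l' ≠ i := by rintro rfl; rcases hl with rfl | rfl <;> omega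
        have h₂ : l' ≠ j := by rintro rfl; rcases hl with rfl | rfl <;> omega
        simp [h₁, h₂]
      · simp [not_or.1 hl]
  have hji : j ≠ i := by rintro rfl; omega
  have := (h.map f).eq
  simp only [map_zpow, lift_pathGen, f, hji, if_true, if_false, DihedralGroup.r_zpow, one_mul,
    DihedralGroup.r_mul_sr, zero_sub, DihedralGroup.sr_mul_r, zero_add,
    DihedralGroup.sr.injEq] at this
  change -t = t at this
  omega

theorem eq_one_of_commute_castSuccHom_succHom (c : PathGroup (n + 2))
    (h : Commute (castSuccHom (succHom c)) (pathGen (n + 4) 0 * pathGen (n + 4) (Fin.last _))) :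
    c = 1 := by
  have h₀ := h.map dropLast
  rw [map_mul, ← Fin.castSucc_zero, dropLast_castSuccHom, dropLast_pathGen_castSucc,
    dropLast_pathGen_last, mul_one] at h₀
  have h₁ : Commute (castSuccHom (succHom c)) (pathGen (n + 4) 0) := by
    simpa using h₀.map castSuccHom
  have hlast := h₁.inv_right.mul_right h
  rw [inv_mul_cancel_left] at hlast
  obtain ⟨t, ht⟩ := mem_zpowers_iff.1 (mem_zpowers_of_commute_pathGen_zero (n + 1) _ ⟨c, rfl⟩ h₀)
  obtain rfl : c = pathGen (n + 2) 0 ^ t := succHom_injective (by simp [← ht])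
  have := eq_zero_of_commute_zpow (i := 1) (j := Fin.last (n + 3)) (by simp)
    (by simpa using hlast)
  simp [this]

end PathGroup

theorem MulEquiv.centralizer_singleton_eq_zpowers {G G' : Type*} [Group G] [Group G']
    (e : G ≃* G') {g : G} (h : Subgroup.centralizer {g} = Subgroup.zpowers g) :
    Subgroup.centralizer {e g} = Subgroup.zpowers (e g) := by
  ext x
  obtain ⟨y, rfl⟩ := e.surjective x
  have := SetLike.ext_iff.1 h y
  simp only [Subgroup.mem_centralizer_iff, Set.mem_singleton_iff, forall_eq,
    Subgroup.mem_zpowers_iff] at this ⊢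
  simpa [← map_mul, ← map_zpow, e.injective.eq_iff] using this

/-- In `G = ⟨g_1,…,g_m ∣ [g_i,g_{i+1}]=1⟩` with `m ≥ 4`, the centralizer of `g_1 * g_m` is the
cyclic subgroup generated by `g_1 * g_m`. -/
theorem stmt5 (m : ℕ) (hm : 4 ≤ m) :
    Subgroup.centralizer {pathGen m ⟨0, by omega⟩ * pathGen m ⟨m - 1, by omega⟩} =
      Subgroup.zpowers (pathGen m ⟨0, by omega⟩ * pathGen m ⟨m - 1, by omega⟩) := by
  obtain ⟨n, rfl⟩ : ∃ n, m = n + 4 := ⟨m - 4, by omega⟩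
  have hg : PathGroup.pushoutEquiv (n + 1) (Monoid.PushoutI.of true (pathGen _ 0) *
      Monoid.PushoutI.of false (pathGen _ (Fin.last _))) =
      pathGen (n + 4) ⟨0, by omega⟩ * pathGen (n + 4) ⟨n + 4 - 1, by omega⟩ := by
    simp only [PathGroup.pushoutEquiv_apply, map_mul, PathGroup.toPathGroup_of_true,
      PathGroup.toPathGroup_of_false, PathGroup.castSuccHom_pathGen, PathGroup.succHom_pathGen,
      Fin.castSucc_zero, Fin.succ_last]
    rfl
  rw [← hg]
  refine MulEquiv.centralizer_singleton_eq_zpowers _ <|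
    Monoid.PushoutI.centralizer_of_mul_of (PathGroup.amalgamMaps_injective _) (by decide)
      PathGroup.pathGen_zero_notMem_range_succHom PathGroup.pathGen_last_notMem_range_castSuccHom
      fun c hc => PathGroup.eq_one_of_commute_castSuccHom_succHom c ?_
  simpa using hc.map (PathGroup.pushoutEquiv (n + 1))
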